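/- For every λ ≥ 1, n ∈ ℕ₀ and x ∈ [−1,1], (1/Γ(λ)) ∫_x^1 (1−t)^{λ−1}(t−x)^{−1/2} C_{n+1}^{λ−1/2}(t) dt = (√π / (Γ(λ−1/2)(n+λ+1/2))) (1−x)^{λ−1/2}[C_{n+1}^λ(x) + C_n^λ(x)], and (1/Γ(λ)) ∫_{−1}^x (1+t)^{λ−1}(x−t)^{−1/2} C_{n+1}^{λ−1/2}(t) dt = (√π / (Γ(λ−1/2)(n+λ+1/2))) (1+x)^{λ−1/2}[C_{n+1}^λ(x) − C_n^λ(x)]. -/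

import Mathlib

open Real MeasureTheory Finset intervalIntegral

noncomputable section

/-- The Gegenbauer (ultraspherical) polynomial `C_n^λ`. -/
def Gegenbauer (lam : ℝ) (n : ℕ) (x : ℝ) : ℝ :=
  ∑ k ∈ Finset.range (n / 2 + 1),
    ((-1 : ℝ) ^ k * Real.Gamma ((n : ℝ) - (k : ℝ) + lam) /
      (Real.Gamma lam * (Nat.factorial k : ℝ) * (Nat.factorial (n - 2 * k) : ℝ))) *
      (2 * x) ^ (n - 2 * k)

/-- The terminating hypergeometric polynomial `₂F₁(−m, b; c; z)`. -/
def hyp2F1 (m : ℕ) (b c z : ℝ) : ℝ :=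
  ∑ k ∈ Finset.range (m + 1),
    ((ascPochhammer ℝ k).eval (-(m : ℝ)) * (ascPochhammer ℝ k).eval b) /
      ((ascPochhammer ℝ k).eval c * (Nat.factorial k : ℝ)) * z ^ k

/-- The half-step fractional integral `I^λ_+`. -/
def Iplus (lam : ℝ) (f : ℝ → ℝ) (x : ℝ) : ℝ :=
  (1 + x) ^ (-lam + 1 / 2) *
    ∫ τ in (-1 : ℝ)..x, (x - τ) ^ (-(1 / 2) : ℝ) * (1 + τ) ^ lam * f τ

/-- The half-step fractional integral `I^λ_−`. -/
def Iminus (lam : ℝ) (f : ℝ → ℝ) (x : ℝ) : ℝ :=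
  (1 - x) ^ (-lam + 1 / 2) *
    ∫ τ in x..(1 : ℝ), (τ - x) ^ (-(1 / 2) : ℝ) * (1 - τ) ^ lam * f τ

/-- `𝓘^λ_+ = I^λ_+ + I^λ_−`. -/
def calIplus (lam : ℝ) (f : ℝ → ℝ) (x : ℝ) : ℝ := Iplus lam f x + Iminus lam f x

/-- `𝓘^λ_− = I^λ_+ − I^λ_−`. -/
def calIminus (lam : ℝ) (f : ℝ → ℝ) (x : ℝ) : ℝ := Iplus lam f x - Iminus lam f x

/-- The half-step fractional derivative `D^λ_+`. -/
def Dplus (lam : ℝ) (f : ℝ → ℝ) (x : ℝ) : ℝ :=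
  (1 + x) *
    deriv (fun y : ℝ => (1 + y) ^ (-lam) *
      ∫ τ in (-1 : ℝ)..y, (y - τ) ^ (-(1 / 2) : ℝ) * (1 + τ) ^ (lam - 1 / 2) * f τ) x

/-- The half-step fractional derivative `D^λ_−`. -/
def Dminus (lam : ℝ) (f : ℝ → ℝ) (x : ℝ) : ℝ :=
  (1 - x) *
    deriv (fun y : ℝ => (1 - y) ^ (-lam) *
      ∫ τ in y..(1 : ℝ), (τ - y) ^ (-(1 / 2) : ℝ) * (1 - τ) ^ (lam - 1 / 2) * f τ) x

/-- `𝓓^λ_+ = D^λ_+ + D^λ_−`. -/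
def calDplus (lam : ℝ) (f : ℝ → ℝ) (x : ℝ) : ℝ := Dplus lam f x + Dminus lam f x

/-- `𝓓^λ_− = D^λ_+ − D^λ_−`. -/
def calDminus (lam : ℝ) (f : ℝ → ℝ) (x : ℝ) : ℝ := Dplus lam f x - Dminus lam f x

/-- Normalization constant `h_n^λ` for the Gegenbauer system. -/
def hGeg (lam : ℝ) (n : ℕ) : ℝ :=
  Real.pi * Real.Gamma (2 * lam + n) /
    ((2 : ℝ) ^ (2 * lam - 1) * (Nat.factorial n : ℝ) * (lam + n) * (Real.Gamma lam) ^ 2)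

/-- The `n`-th Gegenbauer coefficient (parameter `λ`) of `g`. -/
def gegCoeff (lam : ℝ) (g : ℝ → ℝ) (n : ℕ) : ℝ :=
  (1 / hGeg lam n) *
    ∫ t in (-1 : ℝ)..1, g t * Gegenbauer lam n t * (1 - t ^ 2) ^ (lam - 1 / 2)

/-- The Chebyshev polynomial of the first kind, as a real function. -/
def chebT (n : ℕ) (x : ℝ) : ℝ := (Polynomial.Chebyshev.T ℝ (n : ℤ)).eval x

/-- The `n`-th Chebyshev coefficient of `f`. -/
def chebCoeff (f : ℝ → ℝ) (n : ℕ) : ℝ :=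
  if n = 0 then
    (1 / Real.pi) * ∫ t in (-1 : ℝ)..1, f t * (1 - t ^ 2) ^ (-(1 / 2) : ℝ)
  else
    (2 / Real.pi) * ∫ t in (-1 : ℝ)..1, f t * chebT n t * (1 - t ^ 2) ^ (-(1 / 2) : ℝ)

/-- The Legendre polynomial `P_n = C_n^{1/2}`. -/
def legendreP (n : ℕ) (x : ℝ) : ℝ := Gegenbauer (1 / 2) n x

/-- The `n`-th Legendre coefficient of `g`. -/
def legCoeff (g : ℝ → ℝ) (n : ℕ) : ℝ :=
  ((2 * (n : ℝ) + 1) / 2) * ∫ x in (-1 : ℝ)..1, g x * legendreP n x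

/-- `f` is (zonal) positive definite on the sphere `S^m ⊂ ℝ^{m+1}`. -/
def PosDefSphere (m : ℕ) (f : ℝ → ℝ) : Prop :=
  ∀ (n : ℕ) (x : Fin n → EuclideanSpace ℝ (Fin (m + 1))),
    (∀ i, ‖x i‖ = 1) → Function.Injective x →
      ∀ c : Fin n → ℝ,
        0 ≤ ∑ i : Fin n, ∑ j : Fin n, c i * c j * f (inner ℝ (x i) (x j) : ℝ)

/-- `f` is (zonal) strictly positive definite on the sphere `S^m ⊂ ℝ^{m+1}`. -/
def StrictPosDefSphere (m : ℕ) (f : ℝ → ℝ) : Prop :=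
  ∀ (n : ℕ) (x : Fin n → EuclideanSpace ℝ (Fin (m + 1))),
    (∀ i, ‖x i‖ = 1) → Function.Injective x →
      ∀ c : Fin n → ℝ, c ≠ 0 →
        0 < ∑ i : Fin n, ∑ j : Fin n, c i * c j * f (inner ℝ (x i) (x j) : ℝ)

/-- `f ∈ Λ_m`: continuous on `[−1,1]` and positive definite on `S^m`. -/
def MemLambda (m : ℕ) (f : ℝ → ℝ) : Prop :=
  ContinuousOn f (Set.Icc (-1 : ℝ) 1) ∧ PosDefSphere m f

/-- `f ∈ Λ^+_m`: continuous on `[−1,1]` and strictly positive definite on `S^m`. -/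
def MemLambdaPlus (m : ℕ) (f : ℝ → ℝ) : Prop :=
  ContinuousOn f (Set.Icc (-1 : ℝ) 1) ∧ StrictPosDefSphere m f

end

/-!
Expand `C_{n+1}^{λ-1/2}` in powers of `t - 1`. Against the weight `(1-t)^{λ-1} (t-x)^{-1/2}` each
power `(t-1)^j` integrates, by a beta integral, to a multiple of `(1-x)^{λ-1/2} (x-1)^j`, and the
resulting coefficients recombine into the Taylor coefficients at `1` of `C_{n+1}^λ + C_n^λ`. The
Taylor coefficients themselves come from `d/dx C_{m+1}^μ = 2μ C_m^{μ+1}` and the value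
`C_m^μ(1) = (2μ)_m / m!`, the latter proved by a Wilf–Zeilberger telescoping. The integral over
`[-1, x]` follows by the reflection `t ↦ -t` and the parity of `C_m^μ`.
-/

open scoped Nat

noncomputable section

def poch (x : ℝ) (n : ℕ) : ℝ := (ascPochhammer ℝ n).eval x

@[simp]
lemma poch_zero (x : ℝ) : poch x 0 = 1 := by simp [poch]

lemma poch_succ (x : ℝ) (n : ℕ) : poch x (n + 1) = poch x n * (x + n) := by
  simp [poch, ascPochhammer_succ_eval]

lemma poch_succ' (x : ℝ) (n : ℕ) : poch x (n + 1) = x * poch (x + 1) n := by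
  simp [poch, ascPochhammer_succ_left, Polynomial.eval_comp]

lemma poch_pos {x : ℝ} (hx : 0 < x) (n : ℕ) : 0 < poch x n :=
  ascPochhammer_pos n x hx

lemma Gamma_add_nat {x : ℝ} (hx : 0 < x) (n : ℕ) : Gamma (x + n) = poch x n * Gamma x := by
  induction n with
  | zero => simp
  | succ n ih =>
    rw [Nat.cast_succ, ← add_assoc, Gamma_add_one (by positivity), ih, poch_succ]
    ring

lemma cast_factorial_succ (n : ℕ) : ((n + 1)! : ℝ) = (n + 1) * n ! := by
  push_cast [Nat.factorial_succ]
  ring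

def gegenbauerCoeff (μ : ℝ) (m k : ℕ) : ℝ :=
  (-1) ^ k * poch μ (m - k) / (k ! * (m - 2 * k)!)

/-- `Gegenbauer` with `Γ(m - k + μ) / Γ(μ)` as a rising factorial, hence defined for all `μ`. -/
def gegenbauerPoch (μ : ℝ) (m : ℕ) (x : ℝ) : ℝ :=
  ∑ k ∈ range (m / 2 + 1), gegenbauerCoeff μ m k * (2 * x) ^ (m - 2 * k)

lemma Gegenbauer_eq_gegenbauerPoch {μ : ℝ} (hμ : 0 < μ) (m : ℕ) (x : ℝ) :
    Gegenbauer μ m x = gegenbauerPoch μ m x := by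
  refine sum_congr rfl fun k hk => ?_
  have hkm : k ≤ m := by have := mem_range.mp hk; omega
  have hΓ : (m : ℝ) - k + μ = μ + ((m - k : ℕ) : ℝ) := by push_cast [hkm]; ring
  have hΓμ := (Gamma_pos_of_pos hμ).ne'
  rw [hΓ, Gamma_add_nat hμ, gegenbauerCoeff]
  field_simp

lemma Gegenbauer_neg (μ : ℝ) (m : ℕ) (x : ℝ) :
    Gegenbauer μ m (-x) = (-1) ^ m * Gegenbauer μ m x := by
  rw [Gegenbauer, Gegenbauer, mul_sum]
  refine sum_congr rfl fun k hk => ?_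
  obtain ⟨r, rfl⟩ : ∃ r, m = 2 * k + r := ⟨m - 2 * k, by have := mem_range.mp hk; omega⟩
  rw [Nat.add_sub_cancel_left, mul_neg, neg_pow (2 * x), pow_add, pow_mul, neg_one_sq, one_pow]
  ring

def gegenbauerTerm (μ : ℝ) (m k : ℕ) : ℝ :=
  if 2 * k ≤ m then gegenbauerCoeff μ m k * 2 ^ (m - 2 * k) else 0

lemma gegenbauerPoch_one_eq_sum (μ : ℝ) (m : ℕ) :
    gegenbauerPoch μ m 1 = ∑ k ∈ range (m + 1), gegenbauerTerm μ m k := by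
  refine sum_subset_zero_on_sdiff (range_subset_range.2 (by omega)) (fun k hk => ?_)
    (fun k hk => ?_)
  · simp only [mem_sdiff, mem_range] at hk
    exact if_neg (by omega)
  · rw [gegenbauerTerm, if_pos (by have := mem_range.mp hk; omega), mul_one]

lemma gegenbauerTerm_wz_of_le {μ : ℝ} {m k : ℕ} (h : 2 * k + 1 ≤ m) :
    (m + 1 : ℝ) * gegenbauerTerm μ (m + 1) k - (2 * μ + m) * gegenbauerTerm μ m k =
      2 * k * gegenbauerTerm μ (m + 1) k - 2 * (k + 1) * gegenbauerTerm μ (m + 1) (k + 1) := by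
  obtain ⟨r, rfl⟩ : ∃ r, m = 2 * k + r + 1 := ⟨m - (2 * k + 1), by omega⟩
  simp only [gegenbauerTerm, if_pos (by omega : 2 * k ≤ 2 * k + r + 1 + 1),
    if_pos (by omega : 2 * k ≤ 2 * k + r + 1),
    if_pos (by omega : 2 * (k + 1) ≤ 2 * k + r + 1 + 1), gegenbauerCoeff,
    show 2 * k + r + 1 + 1 - k = k + r + 1 + 1 by omega,
    show 2 * k + r + 1 + 1 - 2 * k = r + 1 + 1 by omega,
    show 2 * k + r + 1 - k = k + r + 1 by omega, show 2 * k + r + 1 - 2 * k = r + 1 by omega,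
    show 2 * k + r + 1 + 1 - (k + 1) = k + r + 1 by omega,
    show 2 * k + r + 1 + 1 - 2 * (k + 1) = r by omega, poch_succ, cast_factorial_succ, pow_succ]
  field_simp
  push_cast
  ring

/-- Zeilberger's certificate: the right-hand side telescopes in `k`. -/
lemma gegenbauerTerm_wz (μ : ℝ) (m k : ℕ) :
    (m + 1 : ℝ) * gegenbauerTerm μ (m + 1) k - (2 * μ + m) * gegenbauerTerm μ m k =
      2 * k * gegenbauerTerm μ (m + 1) k - 2 * (k + 1) * gegenbauerTerm μ (m + 1) (k + 1) := by
  rcases le_or_gt (2 * k + 1) m with h | h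
  · exact gegenbauerTerm_wz_of_le h
  rcases (by omega : m = 2 * k ∨ m + 1 = 2 * k ∨ m + 1 < 2 * k) with rfl | hm | hm
  · simp only [gegenbauerTerm, if_pos (by omega : 2 * k ≤ 2 * k + 1), if_pos le_rfl,
      if_neg (by omega : ¬ 2 * (k + 1) ≤ 2 * k + 1), gegenbauerCoeff, Nat.sub_self,
      show 2 * k + 1 - k = k + 1 by omega, show 2 * k - k = k by omega,
      show 2 * k + 1 - 2 * k = 1 by omega, poch_succ]
    simp only [Nat.cast_mul, Nat.cast_ofNat, Nat.factorial_one, Nat.cast_one, mul_one, pow_one,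
      Nat.factorial_zero, pow_zero, mul_zero, sub_zero]
    ring
  · simp only [gegenbauerTerm, if_pos (by omega : 2 * k ≤ m + 1),
      if_neg (by omega : ¬ 2 * k ≤ m), if_neg (by omega : ¬ 2 * (k + 1) ≤ m + 1)]
    rw [show (m : ℝ) + 1 = 2 * k by exact_mod_cast hm]
    ring
  · simp only [gegenbauerTerm, if_neg (by omega : ¬ 2 * k ≤ m + 1),
      if_neg (by omega : ¬ 2 * k ≤ m), if_neg (by omega : ¬ 2 * (k + 1) ≤ m + 1)]
    ring

lemma gegenbauerPoch_one (μ : ℝ) (m : ℕ) : gegenbauerPoch μ m 1 = poch (2 * μ) m / m ! := by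
  induction m with
  | zero => simp [gegenbauerPoch, gegenbauerCoeff]
  | succ m ih =>
    have hdead (j : ℕ) (hj : m + 1 < 2 * j) :
        gegenbauerTerm μ (m + 1) j = 0 ∧ gegenbauerTerm μ m j = 0 :=
      ⟨if_neg (by omega), if_neg (by omega)⟩
    have htele : ∑ k ∈ range (m + 2), ((m + 1 : ℝ) * gegenbauerTerm μ (m + 1) k -
        (2 * μ + m) * gegenbauerTerm μ m k) = 0 := by
      simp only [gegenbauerTerm_wz]
      have h := sum_range_sub' (fun k : ℕ => 2 * (k : ℝ) * gegenbauerTerm μ (m + 1) k) (m + 2)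
      push_cast at h
      simp [h, (hdead (m + 2) (by omega)).1]
    rw [sum_sub_distrib, ← mul_sum, ← mul_sum, sum_range_succ (gegenbauerTerm μ m) (m + 1),
      (hdead (m + 1) (by omega)).2, add_zero, ← gegenbauerPoch_one_eq_sum,
      ← gegenbauerPoch_one_eq_sum, ih, sub_eq_zero] at htele
    rw [poch_succ, cast_factorial_succ]
    field_simp at htele ⊢
    linear_combination htele

lemma gegenbauerCoeff_succ_mul {μ : ℝ} {m k : ℕ} (h : 2 * k ≤ m) :
    gegenbauerCoeff μ (m + 1) k * (m + 1 - 2 * k : ℕ) = μ * gegenbauerCoeff (μ + 1) m k := by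
  obtain ⟨r, rfl⟩ : ∃ r, m = 2 * k + r := ⟨m - 2 * k, by omega⟩
  simp only [gegenbauerCoeff, show 2 * k + r + 1 - k = k + r + 1 by omega,
    show 2 * k + r + 1 - 2 * k = r + 1 by omega, show 2 * k + r - k = k + r by omega,
    Nat.add_sub_cancel_left, poch_succ', cast_factorial_succ]
  field_simp
  push_cast
  ring

lemma hasDerivAt_gegenbauerPoch (μ : ℝ) (m : ℕ) (x : ℝ) :
    HasDerivAt (gegenbauerPoch μ (m + 1)) (2 * μ * gegenbauerPoch (μ + 1) m x) x := by
  have hterm (k : ℕ) :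
      HasDerivAt (fun y => gegenbauerCoeff μ (m + 1) k * (2 * y) ^ (m + 1 - 2 * k))
        (gegenbauerCoeff μ (m + 1) k * ((m + 1 - 2 * k : ℕ) * (2 * x) ^ (m + 1 - 2 * k - 1) * 2))
        x :=
    ((hasDerivAt_pow _ (2 * x)).comp x ((hasDerivAt_id x).const_mul 2 |>.congr_deriv
      (mul_one 2))).const_mul _
  refine (HasDerivAt.fun_sum fun k _ => hterm k).congr_deriv ?_
  rw [gegenbauerPoch, mul_sum]
  refine (sum_subset_zero_on_sdiff (range_subset_range.2 (by omega)) (fun k hk => ?_)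
    (fun k hk => ?_)).symm
  · simp only [mem_sdiff, mem_range] at hk
    simp [show m + 1 - 2 * k = 0 by omega]
  · have h2k : 2 * k ≤ m := by have := mem_range.mp hk; omega
    rw [show m + 1 - 2 * k - 1 = m - 2 * k by omega]
    linear_combination (-2 * (2 * x) ^ (m - 2 * k)) * gegenbauerCoeff_succ_mul h2k

/-- Taylor coefficients of `C_m^μ` at `1`: `2^j (μ)_j / j!` times `C_{m-j}^{μ+j}(1)`. -/
def gegenbauerTaylorCoeff (μ : ℝ) (m j : ℕ) : ℝ :=
  2 ^ j * poch μ j * poch (2 * μ + 2 * j) (m - j) / (j ! * (m - j)!)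

def gegenbauerTaylor (μ : ℝ) (m : ℕ) (x : ℝ) : ℝ :=
  ∑ j ∈ range (m + 1), gegenbauerTaylorCoeff μ m j * (x - 1) ^ j

lemma gegenbauerTaylorCoeff_succ_mul {μ : ℝ} {m j : ℕ} (h : j ≤ m) :
    gegenbauerTaylorCoeff μ (m + 1) (j + 1) * (j + 1) =
      2 * μ * gegenbauerTaylorCoeff (μ + 1) m j := by
  simp only [gegenbauerTaylorCoeff, show m + 1 - (j + 1) = m - j by omega, poch_succ',
    cast_factorial_succ]
  push_cast
  rw [show 2 * μ + 2 * ((j : ℝ) + 1) = 2 * (μ + 1) + 2 * j by ring]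
  field_simp
  ring

lemma hasDerivAt_gegenbauerTaylor (μ : ℝ) (m : ℕ) (x : ℝ) :
    HasDerivAt (gegenbauerTaylor μ (m + 1)) (2 * μ * gegenbauerTaylor (μ + 1) m x) x := by
  have hterm (j : ℕ) : HasDerivAt (fun y => gegenbauerTaylorCoeff μ (m + 1) j * (y - 1) ^ j)
      (gegenbauerTaylorCoeff μ (m + 1) j * (j * (x - 1) ^ (j - 1))) x :=
    (((hasDerivAt_pow j (x - 1)).comp x ((hasDerivAt_id x).sub_const 1)).congr_deriv
      (mul_one _)).const_mul _
  refine (HasDerivAt.fun_sum fun j _ => hterm j).congr_deriv ?_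
  rw [sum_range_succ', gegenbauerTaylor, mul_sum]
  simp only [CharP.cast_eq_zero, zero_mul, mul_zero, add_zero, Nat.add_sub_cancel]
  refine sum_congr rfl fun j hj => ?_
  push_cast
  linear_combination (x - 1) ^ j *
    gegenbauerTaylorCoeff_succ_mul (μ := μ) (Nat.lt_succ_iff.mp (mem_range.mp hj))

lemma gegenbauerTaylor_one (μ : ℝ) (m : ℕ) :
    gegenbauerTaylor μ m 1 = poch (2 * μ) m / m ! := by
  rw [gegenbauerTaylor, sum_range_succ']
  simp [gegenbauerTaylorCoeff]

lemma gegenbauerPoch_eq_gegenbauerTaylor (m : ℕ) :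
    ∀ μ : ℝ, gegenbauerPoch μ m = gegenbauerTaylor μ m := by
  induction m with
  | zero => intro μ; funext x; simp [gegenbauerPoch, gegenbauerTaylor, gegenbauerCoeff,
      gegenbauerTaylorCoeff]
  | succ m ih =>
    intro μ
    have hderiv (y : ℝ) :
        HasDerivAt (gegenbauerPoch μ (m + 1) - gegenbauerTaylor μ (m + 1)) 0 y := by
      simpa [ih] using (hasDerivAt_gegenbauerPoch μ m y).sub (hasDerivAt_gegenbauerTaylor μ m y)
    funext x
    have := is_const_of_deriv_eq_zero (fun y => (hderiv y).differentiableAt)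
      (fun y => (hderiv y).deriv) x 1
    simp only [Pi.sub_apply, gegenbauerPoch_one, gegenbauerTaylor_one, sub_self] at this
    exact sub_eq_zero.mp this

lemma Gegenbauer_eq_gegenbauerTaylor {μ : ℝ} (hμ : 0 < μ) (m : ℕ) (x : ℝ) :
    Gegenbauer μ m x = gegenbauerTaylor μ m x := by
  rw [Gegenbauer_eq_gegenbauerPoch hμ, gegenbauerPoch_eq_gegenbauerTaylor]

lemma integral_rpow_mul_one_sub_rpow {a b : ℝ} (ha : 0 < a) (hb : 0 < b) :
    ∫ s in (0 : ℝ)..1, s ^ (a - 1) * (1 - s) ^ (b - 1) = Gamma a * Gamma b / Gamma (a + b) := by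
  have hreal : Complex.betaIntegral a b =
      ((∫ s in (0 : ℝ)..1, s ^ (a - 1) * (1 - s) ^ (b - 1) : ℝ) : ℂ) := by
    rw [Complex.betaIntegral, ← intervalIntegral.integral_ofReal]
    refine integral_congr fun s hs => ?_
    rw [Set.uIcc_of_le zero_le_one] at hs
    simp only [Complex.ofReal_mul, Complex.ofReal_cpow hs.1,
      Complex.ofReal_cpow (sub_nonneg.2 hs.2), Complex.ofReal_sub, Complex.ofReal_one]
  have hbeta := Complex.betaIntegral_eq_Gamma_mul_div a b (by simpa) (by simpa)
  rw [hreal, ← Complex.ofReal_add, Complex.Gamma_ofReal, Complex.Gamma_ofReal,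
    Complex.Gamma_ofReal] at hbeta
  exact_mod_cast hbeta

lemma integral_one_sub_rpow_mul_sub_rpow {x a c : ℝ} (hx : x < 1) (ha : 0 < a) (hc : -1 < c) :
    ∫ t in x..1, (1 - t) ^ c * (t - x) ^ (a - 1) =
      (1 - x) ^ (c + a) * (Gamma a * Gamma (c + 1) / Gamma (c + a + 1)) := by
  have h1x : 0 < 1 - x := by linarith
  have hsub := intervalIntegral.smul_integral_comp_mul_add
    (fun t => (1 - t) ^ c * (t - x) ^ (a - 1)) (a := 0) (b := 1) (1 - x) x
  simp only [mul_zero, zero_add, mul_one, sub_add_cancel, smul_eq_mul] at hsub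
  rw [← hsub,
    integral_congr (g := fun s => (1 - x) ^ (c + a - 1) * (s ^ (a - 1) * (1 - s) ^ (c + 1 - 1))),
    intervalIntegral.integral_const_mul, integral_rpow_mul_one_sub_rpow ha (by linarith),
    show a + (c + 1) = c + a + 1 by ring, rpow_sub_one h1x.ne']
  · field_simp
  intro s hs
  rw [Set.uIcc_of_le zero_le_one] at hs
  dsimp only
  rw [show 1 - ((1 - x) * s + x) = (1 - x) * (1 - s) by ring, show (1 - x) * s + x - x = (1 - x) * s
    by ring, mul_rpow h1x.le (by linarith [hs.2]), mul_rpow h1x.le hs.1, add_sub_cancel_right,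
    show c + a - 1 = c + (a - 1) by ring, rpow_add h1x]
  ring

lemma intervalIntegrable_one_sub_rpow_mul_sub_rpow (x : ℝ) {a c : ℝ} (ha : 0 < a)
    (hc : 0 ≤ c) :
    IntervalIntegrable (fun t => (1 - t) ^ c * (t - x) ^ (a - 1)) volume x 1 := by
  have hsing : IntervalIntegrable (fun t => (t - x) ^ (a - 1)) volume x 1 := by
    simpa using (intervalIntegral.intervalIntegrable_rpow' (a := 0) (b := 1 - x)
      (by linarith : -1 < a - 1)).comp_sub_right x
  exact hsing.continuousOn_mul ((continuous_const.sub continuous_id).rpow_const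
    fun _ => Or.inr hc).continuousOn

lemma gegenbauerTaylorCoeff_half_shift (lam : ℝ) {n j : ℕ} (hj : j ≤ n) :
    gegenbauerTaylorCoeff (lam - 1 / 2) (n + 1) j * poch lam j * (n + lam + 1 / 2) =
      (gegenbauerTaylorCoeff lam (n + 1) j + gegenbauerTaylorCoeff lam n j) *
        poch (lam - 1 / 2) (j + 1) := by
  obtain ⟨r, rfl⟩ : ∃ r, n = j + r := ⟨n - j, by omega⟩
  simp only [gegenbauerTaylorCoeff, show j + r + 1 - j = r + 1 by omega, Nat.add_sub_cancel_left,
    cast_factorial_succ]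
  rw [poch_succ' (2 * (lam - 1 / 2) + 2 * j),
    show 2 * (lam - 1 / 2) + 2 * j + 1 = 2 * lam + 2 * j by ring, poch_succ (2 * lam + 2 * j),
    poch_succ (lam - 1 / 2) j]
  field_simp
  push_cast
  ring

lemma gegenbauerTaylorCoeff_half_shift_top (lam : ℝ) (n : ℕ) :
    gegenbauerTaylorCoeff (lam - 1 / 2) (n + 1) (n + 1) * poch lam (n + 1) * (n + lam + 1 / 2) =
      gegenbauerTaylorCoeff lam (n + 1) (n + 1) * poch (lam - 1 / 2) (n + 2) := by
  simp only [gegenbauerTaylorCoeff, Nat.sub_self, poch_zero, poch_succ _ (n + 1)]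
  push_cast
  ring

lemma gegenbauerTaylor_add_gegenbauerTaylor {lam : ℝ} (hlam : 1 / 2 < lam) (n : ℕ) (x : ℝ) :
    gegenbauerTaylor lam (n + 1) x + gegenbauerTaylor lam n x =
      ∑ j ∈ range (n + 2), gegenbauerTaylorCoeff (lam - 1 / 2) (n + 1) j *
        (poch lam j * (n + lam + 1 / 2) / poch (lam - 1 / 2) (j + 1)) * (x - 1) ^ j := by
  have hpoch (j : ℕ) : poch (lam - 1 / 2) (j + 1) ≠ 0 := (poch_pos (by linarith) _).ne'
  rw [gegenbauerTaylor, gegenbauerTaylor, sum_range_succ, sum_range_succ _ (n + 1), add_right_comm,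
    ← sum_add_distrib]
  congr 1
  · refine sum_congr rfl fun j hj => ?_
    rw [← add_mul, eq_div_of_mul_eq (hpoch j)
      (gegenbauerTaylorCoeff_half_shift lam (Nat.lt_succ_iff.mp (mem_range.mp hj))).symm]
    field_simp
  · rw [eq_div_of_mul_eq (hpoch (n + 1)) (gegenbauerTaylorCoeff_half_shift_top lam n).symm]
    field_simp

section FractionalIntegral

variable {lam : ℝ} (hlam : 1 ≤ lam)
include hlam

lemma integral_kernel_mul_monomial {x : ℝ} (hx : x < 1) (c : ℝ) (j : ℕ) :
    ∫ t in x..1, (1 - t) ^ (lam - 1) * (t - x) ^ (-(1 / 2) : ℝ) * (c * (t - 1) ^ j) =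
      c * (Gamma lam * √π * poch lam j / (Gamma (lam - 1 / 2) * poch (lam - 1 / 2) (j + 1)) *
        ((1 - x) ^ (lam - 1 / 2) * (x - 1) ^ j)) := by
  have h1x : 0 < 1 - x := by linarith
  rw [integral_congr
      (g := fun t => c * (-1) ^ j * ((1 - t) ^ (lam - 1 + j) * (t - x) ^ ((1 / 2 : ℝ) - 1))),
    intervalIntegral.integral_const_mul,
    integral_one_sub_rpow_mul_sub_rpow hx one_half_pos (by linarith [j.cast_nonneg (α := ℝ)]),
    show lam - 1 + j + 1 = lam + (j : ℝ) by ring, Gamma_add_nat (by linarith),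
    show lam - 1 + j + 1 / 2 + 1 = (lam - 1 / 2) + ((j + 1 : ℕ) : ℝ) by push_cast; ring,
    Gamma_add_nat (by linarith), show lam - 1 + j + 1 / 2 = (lam - 1 / 2) + (j : ℝ) by ring,
    rpow_add_natCast h1x.ne', Gamma_one_half_eq, show x - 1 = -(1 - x) by ring, neg_pow (1 - x)]
  · have hΓ := (Gamma_pos_of_pos (by linarith : 0 < lam - 1 / 2)).ne'
    have hpoch := (poch_pos (by linarith : 0 < lam - 1 / 2) (j + 1)).ne'
    field_simp
  intro t ht
  rw [Set.uIcc_of_le hx.le] at ht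
  dsimp only
  rw [rpow_add_of_nonneg (by linarith [ht.2]) (by linarith) (by positivity), rpow_natCast,
    show t - 1 = -(1 - t) by ring, neg_pow (1 - t), show (1 / 2 : ℝ) - 1 = -(1 / 2) by norm_num]
  ring

theorem integral_one_sub_rpow_mul_Gegenbauer (n : ℕ) {x : ℝ} (hx : x ≤ 1) :
    (1 / Gamma lam) *
        ∫ t in x..(1 : ℝ),
          (1 - t) ^ (lam - 1) * (t - x) ^ (-(1 / 2) : ℝ) * Gegenbauer (lam - 1 / 2) (n + 1) t =
      (√π / (Gamma (lam - 1 / 2) * ((n : ℝ) + lam + 1 / 2))) *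
        (1 - x) ^ (lam - 1 / 2) * (Gegenbauer lam (n + 1) x + Gegenbauer lam n x) := by
  rcases hx.eq_or_lt with rfl | hx
  · rw [integral_same, sub_self, zero_rpow (by linarith)]
    ring
  have hintegrable (j : ℕ) : IntervalIntegrable (fun t => (1 - t) ^ (lam - 1) *
      (t - x) ^ (-(1 / 2) : ℝ) * (gegenbauerTaylorCoeff (lam - 1 / 2) (n + 1) j * (t - 1) ^ j))
      volume x 1 := by
    refine IntervalIntegrable.mul_continuousOn ?_ (by fun_prop)
    convert intervalIntegrable_one_sub_rpow_mul_sub_rpow x one_half_pos (sub_nonneg.2 hlam)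
      using 3
    norm_num
  simp_rw [Gegenbauer_eq_gegenbauerTaylor (by linarith : 0 < lam),
    gegenbauerTaylor_add_gegenbauerTaylor (by linarith : 1 / 2 < lam),
    Gegenbauer_eq_gegenbauerTaylor (by linarith : 0 < lam - 1 / 2), gegenbauerTaylor, mul_sum]
  rw [integral_finsetSum fun j _ => hintegrable j, mul_sum]
  refine sum_congr rfl fun j _ => ?_
  rw [integral_kernel_mul_monomial hlam hx]
  have hΓ := (Gamma_pos_of_pos (by linarith : 0 < lam)).ne'
  have hΓ' := (Gamma_pos_of_pos (by linarith : 0 < lam - 1 / 2)).ne'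
  have hpoch := (poch_pos (by linarith : 0 < lam - 1 / 2) (j + 1)).ne'
  field_simp

theorem integral_one_add_rpow_mul_Gegenbauer (n : ℕ) {x : ℝ} (hx : -1 ≤ x) :
    (1 / Gamma lam) *
        ∫ t in (-1 : ℝ)..x,
          (1 + t) ^ (lam - 1) * (x - t) ^ (-(1 / 2) : ℝ) * Gegenbauer (lam - 1 / 2) (n + 1) t =
      (√π / (Gamma (lam - 1 / 2) * ((n : ℝ) + lam + 1 / 2))) *
        (1 + x) ^ (lam - 1 / 2) * (Gegenbauer lam (n + 1) x - Gegenbauer lam n x) := by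
  have hsign : (-1 : ℝ) ^ n * (-1) ^ n = 1 := by rw [← mul_pow]; norm_num
  have hreflect :
      ∫ t in (-1 : ℝ)..x,
        (1 + t) ^ (lam - 1) * (x - t) ^ (-(1 / 2) : ℝ) * Gegenbauer (lam - 1 / 2) (n + 1) t =
      (-1) ^ (n + 1) * ∫ t in -x..1,
        (1 - t) ^ (lam - 1) * (t - -x) ^ (-(1 / 2) : ℝ) * Gegenbauer (lam - 1 / 2) (n + 1) t := by
    rw [← neg_neg (1 : ℝ), ← intervalIntegral.integral_comp_neg, neg_neg,
      ← intervalIntegral.integral_const_mul]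
    refine integral_congr fun t _ => ?_
    simp only [Gegenbauer_neg, sub_neg_eq_add, add_comm (-t) x, ← sub_eq_add_neg, pow_succ]
    linear_combination (-(1 + t) ^ (lam - 1) * (x - t) ^ (-(1 / 2) : ℝ) *
      Gegenbauer (lam - 1 / 2) (n + 1) t) * hsign
  have h := integral_one_sub_rpow_mul_Gegenbauer hlam n (x := -x) (by linarith)
  rw [sub_neg_eq_add, Gegenbauer_neg, Gegenbauer_neg] at h
  rw [hreflect, mul_left_comm, h, pow_succ]
  linear_combination (√π / (Gamma (lam - 1 / 2) * ((n : ℝ) + lam + 1 / 2)) *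
    (1 + x) ^ (lam - 1 / 2) * (Gegenbauer lam (n + 1) x - Gegenbauer lam n x)) * hsign

end FractionalIntegral

end

/-- fractional integrals of `C_{n+1}^{λ−1/2}` for `λ ≥ 1`. -/
theorem stmt13 (lam : ℝ) (hlam : 1 ≤ lam) (n : ℕ) (x : ℝ) (hx : x ∈ Set.Icc (-1 : ℝ) 1) :
    (1 / Real.Gamma lam) *
        ∫ t in x..(1 : ℝ),
          (1 - t) ^ (lam - 1) * (t - x) ^ (-(1 / 2) : ℝ) * Gegenbauer (lam - 1 / 2) (n + 1) t =
      (Real.sqrt Real.pi / (Real.Gamma (lam - 1 / 2) * ((n : ℝ) + lam + 1 / 2))) *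
        (1 - x) ^ (lam - 1 / 2) * (Gegenbauer lam (n + 1) x + Gegenbauer lam n x) ∧
    (1 / Real.Gamma lam) *
        ∫ t in (-1 : ℝ)..x,
          (1 + t) ^ (lam - 1) * (x - t) ^ (-(1 / 2) : ℝ) * Gegenbauer (lam - 1 / 2) (n + 1) t =
      (Real.sqrt Real.pi / (Real.Gamma (lam - 1 / 2) * ((n : ℝ) + lam + 1 / 2))) *
        (1 + x) ^ (lam - 1 / 2) * (Gegenbauer lam (n + 1) x - Gegenbauer lam n x) :=
  ⟨integral_one_sub_rpow_mul_Gegenbauer hlam n hx.2,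
    integral_one_add_rpow_mul_Gegenbauer hlam n hx.1⟩
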